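/- arXiv:1909.11921 — 4 statements merged into one kernel-verified Lean document; each statement's English description precedes it below -/
import Mathlib

section
/- Let φ : E → ℝ and let p ∈ [0,1]^N be a mixed stopping strategy with p_x > 0 for every absorbing state x ∈ E. If φ(x) = p_x f(x) + (1 − p_x) E_x[φ(X_1)] for every x ∈ E, then φ(x) = φ_p(x) for every x ∈ E. -/
set_option linter.unusedSectionVars false


/-!
Analytic model of the time-inconsistent stopping framework of Christensen & Lindensjö,
"Time-inconsistent stopping, myopic adjustment & equilibrium stability".

A time-homogeneous Markov chain `X` on a finite state space `E` is encoded by its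
transition matrix `P` (`P x y = P_x(X_1 = y)`).  A mixed stopping strategy is a vector
`p ∈ [0,1]^E`; the associated stopping time is `τ_p = min {n ≥ 0 : Y_n ≤ p_{X_n}}`,
where the `Y_n` are i.i.d. uniform randomization devices.  The quantity
`phi P p f x = E_x[f(X_{τ_p})]` (with the convention `f(X_{τ_p}) := lim_n f(X_n)` on
`{τ_p = ∞}`, the limit existing a.s. by absorption) is realized analytically, via
dominated convergence, as the limit in `n` of the finite-horizon values
`phiSeq P p f n x = E_x[f(X_{τ_p ∧ n})]`, which satisfy the one-step recursion given
by the Markov property.  Likewise `step P v x = E_x[v(X_1)]`.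
-/

open Filter

variable {E : Type*}

/-- One-step expectation operator: `step P v x = E_x[v(X_1)] = ∑ y, P x y * v y`. -/
noncomputable def step [Fintype E] (P : E → E → ℝ) (v : E → ℝ) (x : E) : ℝ :=
  ∑ y, P x y * v y

/-- Finite-horizon value `phiSeq P p f n x = E_x[f(X_{τ_p ∧ n})]`. -/
noncomputable def phiSeq [Fintype E] (P : E → E → ℝ) (p f : E → ℝ) : ℕ → E → ℝ
  | 0 => f
  | n + 1 => fun x => p x * f x + (1 - p x) * step P (phiSeq P p f n) x

/-- `phi P p f x = E_x[f(X_{τ_p})]`, with the convention `f(X_{τ_p}) := lim_n f(X_n)`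
on `{τ_p = ∞}`; by dominated convergence it is the limit of the finite-horizon values. -/
noncomputable def phi [Fintype E] (P : E → E → ℝ) (p f : E → ℝ) (x : E) : ℝ :=
  limUnder atTop fun n => phiSeq P p f n x

/-- `P` is a transition matrix (row-stochastic). -/
def IsTransition [Fintype E] (P : E → E → ℝ) : Prop :=
  (∀ x y, 0 ≤ P x y) ∧ ∀ x, ∑ y, P x y = 1

/-- `a` is an absorbing state of the chain. -/
def IsAbsorbingState (P : E → E → ℝ) (a : E) : Prop := P a a = 1

/-- The chain is absorbing: from each starting state, some absorbing state is reached
with positive probability in a finite number of steps. -/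
def IsAbsorbingChain [Fintype E] [DecidableEq E] (P : E → E → ℝ) : Prop :=
  ∀ x : E, ∃ (a : E) (n : ℕ), IsAbsorbingState P a ∧ 0 < ((Matrix.of P) ^ n) x a

/-- A mixed stopping strategy: a vector in `[0,1]^E`. -/
def IsStrategy (p : E → ℝ) : Prop := ∀ x, p x ∈ Set.Icc (0 : ℝ) 1

/-- `Kval P f h g p x q
      = q f(x) + (1-q) E_x[φ_p(X_1)] + g (q h(x) + (1-q) E_x[ψ_p(X_1)])`. -/
noncomputable def Kval [Fintype E] (P : E → E → ℝ) (f h : E → ℝ) (g : ℝ → ℝ)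
    (p : E → ℝ) (x : E) (q : ℝ) : ℝ :=
  q * f x + (1 - q) * step P (phi P p f) x
    + g (q * h x + (1 - q) * step P (phi P p h) x)

/-- `Jval P f h g p x = φ_p(x) + g(ψ_p(x)) = E_x[f(X_{τ_p})] + g(E_x[h(X_{τ_p})])`. -/
noncomputable def Jval [Fintype E] (P : E → E → ℝ) (f h : E → ℝ) (g : ℝ → ℝ)
    (p : E → ℝ) (x : E) : ℝ :=
  phi P p f x + g (phi P p h x)

/-- Subgame perfect Nash equilibrium (condition (EqI)). -/
def IsEquilibrium [Fintype E] (P : E → E → ℝ) (f h : E → ℝ) (g : ℝ → ℝ)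
    (p : E → ℝ) : Prop :=
  ∀ x : E, ∀ q ∈ Set.Icc (0 : ℝ) 1, Kval P f h g p x q ≤ Jval P f h g p x

section aux
variable [Fintype E] [DecidableEq E]

lemma step_mono' (P : E → E → ℝ) (hP0 : ∀ x y, 0 ≤ P x y) {v w : E → ℝ} (h : v ≤ w) :
    step P v ≤ step P w := fun x =>
  Finset.sum_le_sum fun y _ => mul_le_mul_of_nonneg_left (h y) (hP0 x y)

lemma step_smul' (P : E → E → ℝ) (c : ℝ) (v : E → ℝ) :
    step P (c • v) = c • step P v := by
  funext x
  simp [step, Finset.mul_sum, mul_left_comm]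

lemma matpow_nonneg (P : E → E → ℝ) (hP : IsTransition P) :
    ∀ (n : ℕ) (x z : E), 0 ≤ ((Matrix.of P) ^ n) x z := by
  intro n
  induction n with
  | zero => intro x z; simp [Matrix.one_apply]; positivity
  | succ n ih =>
    intro x z
    rw [pow_succ, Matrix.mul_apply]
    exact Finset.sum_nonneg fun y _ => mul_nonneg (ih x y) (hP.1 y z)

lemma matpow_rowsum (P : E → E → ℝ) (hP : IsTransition P) :
    ∀ (n : ℕ) (x : E), ∑ z, ((Matrix.of P) ^ n) x z = 1 := by
  intro n
  induction n with
  | zero => intro x; simp [Matrix.one_apply]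
  | succ n ih =>
    intro x
    have : ∀ z, ((Matrix.of P) ^ (n+1)) x z = ∑ y, ((Matrix.of P) ^ n) x y * P y z := by
      intro z; rw [pow_succ, Matrix.mul_apply]; rfl
    simp only [this]
    rw [Finset.sum_comm]
    simp_rw [← Finset.mul_sum, hP.2, mul_one, ih]
end aux


/-- Lemma A.3: if `p` is a strategy with `p_x > 0` at every absorbing state and
`φ : E → ℝ` satisfies `φ(x) = p_x f(x) + (1-p_x) E_x[φ(X_1)]` for every `x`, then
`φ = φ_p`. -/
theorem phi_uniqueness [Fintype E] [DecidableEq E]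
    (P : E → E → ℝ) (hP : IsTransition P) (habs : IsAbsorbingChain P)
    (f : E → ℝ) (phiF : E → ℝ) (p : E → ℝ) (hp : IsStrategy p)
    (hpa : ∀ a : E, IsAbsorbingState P a → 0 < p a)
    (hrec : ∀ x : E, phiF x = p x * f x + (1 - p x) * step P phiF x) :
    ∀ x : E, phiF x = phi P p f x := by
  obtain ⟨hP0, hP1⟩ := hP
  intro x₀
  haveI : Nonempty E := ⟨x₀⟩
  set U : (E → ℝ) → (E → ℝ) := fun v x => (1 - p x) * step P v x with hU
  have hq0 : ∀ x, 0 ≤ 1 - p x := fun x => by have := (hp x).2; linarith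
  have hq1 : ∀ x, 1 - p x ≤ 1 := fun x => by have := (hp x).1; linarith
  have hUmono : Monotone U := by
    intro v w hvw x
    exact mul_le_mul_of_nonneg_left (step_mono' P hP0 hvw x) (hq0 x)
  have hUsmul : ∀ (k : ℕ) (c : ℝ) (v : E → ℝ), U^[k] (c • v) = c • U^[k] v := by
    intro k
    induction k with
    | zero => intro c v; simp
    | succ k ih =>
      intro c v
      rw [Function.iterate_succ_apply, Function.iterate_succ_apply, ← ih]
      congr 1
      funext x
      simp only [hU, step_smul' P c v, Pi.smul_apply, smul_eq_mul]
      ring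
  set u : ℕ → E → ℝ := fun n => U^[n] (fun _ => 1) with hu
  have hu_succ : ∀ n, u (n+1) = U (u n) := fun n => Function.iterate_succ_apply' U n _
  have hu_zero : u 0 = fun _ => 1 := rfl
  have hu_nonneg : ∀ n x, 0 ≤ u n x := by
    intro n
    induction n with
    | zero => intro x; rw [hu_zero]; norm_num
    | succ n ih =>
      intro x
      rw [hu_succ]
      exact mul_nonneg (hq0 x)
        (Finset.sum_nonneg fun y _ => mul_nonneg (hP0 x y) (ih y))
  have hu_anti1 : ∀ n, u (n+1) ≤ u n := by
    intro n
    induction n with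
    | zero =>
      intro x
      rw [hu_succ, hu_zero]
      show (1 - p x) * step P (fun _ => 1) x ≤ 1
      have : step P (fun _ => 1) x = 1 := by simp [step, hP1 x]
      rw [this, mul_one]
      exact hq1 x
    | succ n ih =>
      have h := hUmono ih
      rw [← hu_succ (n+1), ← hu_succ n] at h
      exact h
  have hu_anti : Antitone u := antitone_nat_of_succ_le hu_anti1
  -- key bound via matrix powers
  have hbound : ∀ (n : ℕ) (x : E),
      u (n+1) x ≤ ∑ z, ((Matrix.of P) ^ n) x z * (1 - p z) := by
    intro n
    induction n with
    | zero =>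
      intro x
      rw [hu_succ, hu_zero]
      have h1 : step P (fun _ => 1) x = 1 := by simp [step, hP1 x]
      show (1 - p x) * step P (fun _ => 1) x ≤ _
      rw [h1, mul_one]
      simp [Matrix.one_apply]
    | succ n ih =>
      intro x
      rw [hu_succ]
      have hstep : step P (u (n+1)) x ≤ ∑ z, ((Matrix.of P) ^ (n+1)) x z * (1 - p z) := by
        have h2 : ∀ z, ((Matrix.of P) ^ (n+1)) x z = ∑ y, P x y * ((Matrix.of P) ^ n) y z := by
          intro z
          rw [pow_succ', Matrix.mul_apply]
          rfl
        calc step P (u (n+1)) x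
            ≤ ∑ y, P x y * (∑ z, ((Matrix.of P) ^ n) y z * (1 - p z)) :=
              Finset.sum_le_sum fun y _ => mul_le_mul_of_nonneg_left (ih y) (hP0 x y)
          _ = ∑ z, ((Matrix.of P) ^ (n+1)) x z * (1 - p z) := by
              simp_rw [h2, Finset.sum_mul, Finset.mul_sum]
              rw [Finset.sum_comm]
              apply Finset.sum_congr rfl
              intro z _
              apply Finset.sum_congr rfl
              intro y _
              ring
      have hnn : 0 ≤ step P (u (n+1)) x :=
        Finset.sum_nonneg fun y _ => mul_nonneg (hP0 x y) (hu_nonneg _ y)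
      calc (1 - p x) * step P (u (n+1)) x ≤ 1 * step P (u (n+1)) x :=
            mul_le_mul_of_nonneg_right (hq1 x) hnn
        _ = step P (u (n+1)) x := one_mul _
        _ ≤ _ := hstep
  choose a m hA hpos using habs
  have hlt : ∀ x, u (m x + 1) x < 1 := by
    intro x
    have h1 := hbound (m x) x
    have h2 : ∑ z, ((Matrix.of P) ^ (m x)) x z * (1 - p z)
        ≤ 1 - ((Matrix.of P) ^ (m x)) x (a x) * p (a x) := by
      have hexp : ∀ z, ((Matrix.of P) ^ (m x)) x z * (1 - p z)
          = ((Matrix.of P) ^ (m x)) x z - ((Matrix.of P) ^ (m x)) x z * p z := by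
        intro z; ring
      simp_rw [hexp]
      rw [Finset.sum_sub_distrib, matpow_rowsum P ⟨hP0, hP1⟩]
      have : ((Matrix.of P) ^ (m x)) x (a x) * p (a x)
          ≤ ∑ z, ((Matrix.of P) ^ (m x)) x z * p z := by
        apply Finset.single_le_sum (f := fun z => ((Matrix.of P) ^ (m x)) x z * p z)
          (fun z _ => mul_nonneg (matpow_nonneg P ⟨hP0, hP1⟩ _ x z) (hp z).1)
          (Finset.mem_univ (a x))
      linarith
    have h3 : 0 < ((Matrix.of P) ^ (m x)) x (a x) * p (a x) :=
      mul_pos (hpos x) (hpa _ (hA x))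
    linarith
  set N : ℕ := Finset.univ.sup (fun x => m x + 1) with hN
  have hNx : ∀ x, m x + 1 ≤ N := by
    intro x
    rw [hN]
    exact Finset.le_sup (f := fun x => m x + 1) (Finset.mem_univ x)
  have hN1 : 1 ≤ N := le_trans (Nat.le_add_left 1 (m x₀)) (hNx x₀)
  set c : ℝ := Finset.univ.sup' Finset.univ_nonempty (fun x => u N x) with hc
  have hcl : c < 1 := by
    rw [hc, Finset.sup'_lt_iff]
    intro x _
    exact lt_of_le_of_lt (hu_anti (hNx x) x) (hlt x)
  have hcle : ∀ x, u N x ≤ c := fun x => Finset.le_sup' (fun x => u N x) (Finset.mem_univ x)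
  have hc0 : 0 ≤ c := le_trans (hu_nonneg N x₀) (hcle x₀)
  have hpow : ∀ (k : ℕ) (x : E), u (k * N) x ≤ c ^ k := by
    intro k
    induction k with
    | zero => intro x; simpa using le_of_eq (congrFun hu_zero x)
    | succ k ih =>
      intro x
      have hadd : (k + 1) * N = k * N + N := by ring
      have h1 : u (k * N + N) = U^[k * N] (u N) :=
        Function.iterate_add_apply U (k * N) N _
      have h2 : U^[k * N] (u N) ≤ U^[k * N] (c • (fun _ => (1:ℝ))) := by
        apply (hUmono.iterate (k * N))
        intro x
        simpa using hcle x
      have h3 : U^[k * N] (c • (fun _ => (1:ℝ))) = c • u (k * N) := by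
        rw [hUsmul]
      calc u ((k + 1) * N) x = u (k * N + N) x := by rw [hadd]
        _ ≤ (c • u (k * N)) x := by rw [h1]; exact le_trans (h2 x) (le_of_eq (congrFun h3 x))
        _ = c * u (k * N) x := rfl
        _ ≤ c * c ^ k := mul_le_mul_of_nonneg_left (ih x) hc0
        _ = c ^ (k + 1) := by ring
  have huc : ∀ (n : ℕ) (x : E), u n x ≤ c ^ (n / N) := by
    intro n x
    exact le_trans (hu_anti (Nat.div_mul_le_self n N) x) (hpow (n / N) x)
  -- the difference
  set d : ℕ → E → ℝ := fun n x => phiF x - phiSeq P p f n x with hd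
  set M : ℝ := ∑ y, |phiF y - f y| with hM
  have hM0 : 0 ≤ M := Finset.sum_nonneg fun y _ => abs_nonneg _
  have hdb : ∀ (n : ℕ) (x : E), |d n x| ≤ M * u n x := by
    intro n
    induction n with
    | zero =>
      intro x
      have : |d 0 x| ≤ M := by
        rw [hM]
        exact Finset.single_le_sum (f := fun y => |phiF y - f y|)
          (fun y _ => abs_nonneg _) (Finset.mem_univ x)
      simpa [hu_zero] using this
    | succ n ih =>
      intro x
      have hdrec : d (n+1) x = (1 - p x) * ∑ y, P x y * d n y := by
        have hsub : step P phiF x - step P (phiSeq P p f n) x = ∑ y, P x y * d n y := by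
          simp only [step, hd, ← Finset.sum_sub_distrib, mul_sub]
        show phiF x - phiSeq P p f (n+1) x = _
        rw [show phiSeq P p f (n+1) x
            = p x * f x + (1 - p x) * step P (phiSeq P p f n) x from rfl,
          hrec x, ← hsub]
        ring
      rw [hdrec, hu_succ]
      have h1 : |(1 - p x) * ∑ y, P x y * d n y| = (1 - p x) * |∑ y, P x y * d n y| := by
        rw [abs_mul, abs_of_nonneg (hq0 x)]
      rw [h1]
      have h2 : |∑ y, P x y * d n y| ≤ ∑ y, P x y * (M * u n y) := by
        calc |∑ y, P x y * d n y| ≤ ∑ y, |P x y * d n y| := Finset.abs_sum_le_sum_abs _ _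
          _ = ∑ y, P x y * |d n y| := by
              apply Finset.sum_congr rfl
              intro y _
              rw [abs_mul, abs_of_nonneg (hP0 x y)]
          _ ≤ ∑ y, P x y * (M * u n y) :=
              Finset.sum_le_sum fun y _ => mul_le_mul_of_nonneg_left (ih y) (hP0 x y)
      calc (1 - p x) * |∑ y, P x y * d n y| ≤ (1 - p x) * ∑ y, P x y * (M * u n y) :=
            mul_le_mul_of_nonneg_left h2 (hq0 x)
        _ = M * ((1 - p x) * step P (u n) x) := by
            simp only [step, Finset.mul_sum]
            exact Finset.sum_congr rfl fun y _ => by ring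
  -- convergence
  have hNtend : Tendsto (fun n : ℕ => n / N) atTop atTop := by
    apply tendsto_atTop_atTop.2
    intro b
    refine ⟨b * N, fun a ha => ?_⟩
    rw [Nat.le_div_iff_mul_le (lt_of_lt_of_le Nat.zero_lt_one hN1)]
    exact ha
  have hctend : Tendsto (fun n : ℕ => c ^ (n / N)) atTop (nhds 0) :=
    (tendsto_pow_atTop_nhds_zero_of_lt_one hc0 hcl).comp hNtend
  have hgtend : Tendsto (fun n : ℕ => M * c ^ (n / N)) atTop (nhds 0) := by
    simpa using hctend.const_mul M
  have habstend : Tendsto (fun n => |d n x₀|) atTop (nhds 0) := by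
    apply squeeze_zero (fun n => abs_nonneg _) (g := fun n => M * c ^ (n / N)) _ hgtend
    intro n
    exact le_trans (hdb n x₀) (mul_le_mul_of_nonneg_left (huc n x₀) hM0)
  have hdtend : Tendsto (fun n => d n x₀) atTop (nhds 0) := by
    exact (tendsto_zero_iff_abs_tendsto_zero _).mpr habstend
  have hphitend : Tendsto (fun n => phiSeq P p f n x₀) atTop (nhds (phiF x₀)) := by
    have : (fun n => phiSeq P p f n x₀) = fun n => phiF x₀ - d n x₀ := by
      funext n; simp [hd]
    rw [this]
    simpa using (tendsto_const_nhds (x := phiF x₀)).sub hdtend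
  exact (hphitend.limUnder_eq).symm
end

section
/- (Variance problem) Let M ≥ 1 and let X be the Markov chain on E = {0,1,…,M} in which state 0 is absorbing, state M is reflecting (from M the chain moves to M−1 with probability 1), and from each i ∈ {1,…,M−1} the chain moves to i+1 or i−1 each with probability 1/2. For the variance problem, i.e. f(x) = x², g(x) = −x², h(x) = x, the mixed stopping strategy p̂ with p̂_0 = 1, p̂_i = 0 for i ∈ {1,…,M−1}, and p̂_M = 1/(M+1) is an equilibrium, and its equilibrium value function equals J_p̂(i) = iM/2 − (i/2)² = Var_i(X_{τ_p̂}) for every i ∈ {0,…,M}. -/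
/-!
Analytic model of the time-inconsistent stopping framework of Christensen & Lindensjö,
"Time-inconsistent stopping, myopic adjustment & equilibrium stability".

A time-homogeneous Markov chain `X` on a finite state space `E` is encoded by its
transition matrix `P` (`P x y = P_x(X_1 = y)`).  A mixed stopping strategy is a vector
`p ∈ [0,1]^E`; the associated stopping time is `τ_p = min {n ≥ 0 : Y_n ≤ p_{X_n}}`,
where the `Y_n` are i.i.d. uniform randomization devices.  The quantity
`phi P p f x = E_x[f(X_{τ_p})]` (with the convention `f(X_{τ_p}) := lim_n f(X_n)` on
`{τ_p = ∞}`, the limit existing a.s. by absorption) is realized analytically, via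
dominated convergence, as the limit in `n` of the finite-horizon values
`phiSeq P p f n x = E_x[f(X_{τ_p ∧ n})]`, which satisfy the one-step recursion given
by the Markov property.  Likewise `step P v x = E_x[v(X_1)]`.
-/

open Filter

variable {E : Type*}

/-! The values `φ_p̂` are identified by a weighted contraction argument: for the weight
`w(i) = M² + 1 - (M - i)²` one has `(1 - p̂) E[w(X_1)] ≤ θ w` with `θ = M² / (M² + 1) < 1`, so the
finite-horizon values converge geometrically to the fixed point of their recursion. For
`f(i) = i²` and `h(i) = i` the fixed points are `M i / 2` and `i / 2`: both are affine, hence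
harmonic in the interior, and they are consistent with stopping at `0` and with the
randomized stop at `M`. With these values the equilibrium condition at each state becomes a
quadratic inequality in `q` with a visibly nonnegative gap. -/

section Contraction

open Topology

variable [Fintype E] {Q : E → E → ℝ}

lemma step_sub (u v : E → ℝ) (x : E) : step Q (u - v) x = step Q u x - step Q v x := by
  simp only [step, Pi.sub_apply, mul_sub, Finset.sum_sub_distrib]

lemma step_const_mul (c : ℝ) (u : E → ℝ) (x : E) :
    step Q (fun y => c * u y) x = c * step Q u x := by
  simp only [step, Finset.mul_sum]
  exact Finset.sum_congr rfl fun y _ => by ring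

lemma step_mono (hQ : ∀ x y, 0 ≤ Q x y) {u v : E → ℝ} (huv : ∀ y, u y ≤ v y) (x : E) :
    step Q u x ≤ step Q v x :=
  Finset.sum_le_sum fun y _ => mul_le_mul_of_nonneg_left (huv y) (hQ x y)

lemma abs_step_le (hQ : ∀ x y, 0 ≤ Q x y) (u : E → ℝ) (x : E) :
    |step Q u x| ≤ step Q (fun y => |u y|) x := by
  refine (Finset.abs_sum_le_sum_abs _ _).trans_eq (Finset.sum_congr rfl fun y _ => ?_)
  rw [abs_mul, abs_of_nonneg (hQ x y)]

variable {p f v w : E → ℝ} {θ : ℝ}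

lemma abs_phiSeq_sub_le (hQ : ∀ x y, 0 ≤ Q x y) (hp : ∀ x, p x ≤ 1) (hθ : 0 ≤ θ)
    (hcontr : ∀ x, (1 - p x) * step Q w x ≤ θ * w x)
    (hv : ∀ x, v x = p x * f x + (1 - p x) * step Q v x)
    (hfv : ∀ x, |f x - v x| ≤ w x) (n : ℕ) (x : E) :
    |phiSeq Q p f n x - v x| ≤ θ ^ n * w x := by
  induction n generalizing x with
  | zero => simpa [phiSeq] using hfv x
  | succ n ih =>
    have hp' : 0 ≤ 1 - p x := sub_nonneg.2 (hp x)
    have hrec : phiSeq Q p f (n + 1) x - v x = (1 - p x) * step Q (phiSeq Q p f n - v) x := by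
      rw [step_sub, hv x]
      simp only [phiSeq]
      ring
    calc |phiSeq Q p f (n + 1) x - v x|
        ≤ (1 - p x) * step Q (fun y => θ ^ n * w y) x := by
          rw [hrec, abs_mul, abs_of_nonneg hp']
          exact mul_le_mul_of_nonneg_left
            ((abs_step_le hQ _ x).trans (step_mono hQ ih x)) hp'
      _ = θ ^ n * ((1 - p x) * step Q w x) := by rw [step_const_mul]; ring
      _ ≤ θ ^ n * (θ * w x) := mul_le_mul_of_nonneg_left (hcontr x) (pow_nonneg hθ n)
      _ = θ ^ (n + 1) * w x := by ring

lemma phi_eq_of_contraction (hQ : ∀ x y, 0 ≤ Q x y) (hp : ∀ x, p x ≤ 1) (hθ₀ : 0 ≤ θ)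
    (hθ₁ : θ < 1) (hw : ∀ x, 1 ≤ w x) (hcontr : ∀ x, (1 - p x) * step Q w x ≤ θ * w x)
    (hv : ∀ x, v x = p x * f x + (1 - p x) * step Q v x) (x : E) :
    phi Q p f x = v x := by
  set C := ∑ y, |f y - v y|
  have hC : 0 ≤ C := Finset.sum_nonneg fun y _ => abs_nonneg _
  have hfv (y : E) : |f y - v y| ≤ C * w y :=
    calc |f y - v y| ≤ C :=
          Finset.single_le_sum (f := fun y => |f y - v y|) (fun _ _ => abs_nonneg _)
            (Finset.mem_univ y)
      _ ≤ C * w y := le_mul_of_one_le_right hC (hw y)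
  have hcontrC (y : E) : (1 - p y) * step Q (fun z => C * w z) y ≤ θ * (C * w y) := by
    rw [step_const_mul]
    linarith [mul_le_mul_of_nonneg_left (hcontr y) hC]
  have hbound (n : ℕ) : ‖phiSeq Q p f n x - v x‖ ≤ θ ^ n * (C * w x) :=
    abs_phiSeq_sub_le hQ hp hθ₀ hcontrC hv hfv n x
  have hlim : Tendsto (fun n => θ ^ n * (C * w x)) atTop (𝓝 0) := by
    simpa using (tendsto_pow_atTop_nhds_zero_of_lt_one hθ₀ hθ₁).mul_const (C * w x)
  refine Tendsto.limUnder_eq ?_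
  simpa using (squeeze_zero_norm hbound hlim).add_const (v x)

end Contraction

noncomputable def absorbingReflectingWalk (M : ℕ) (i j : Fin (M + 1)) : ℝ :=
  if (i : ℕ) = 0 then (if j = i then 1 else 0)
  else if (i : ℕ) = M then (if (j : ℕ) + 1 = M then 1 else 0)
  else if (j : ℕ) = (i : ℕ) + 1 ∨ (j : ℕ) + 1 = (i : ℕ) then 1 / 2 else 0

noncomputable def varianceStrategy (M : ℕ) (i : Fin (M + 1)) : ℝ :=
  if (i : ℕ) = 0 then 1 else if (i : ℕ) = M then 1 / ((M : ℝ) + 1) else 0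

section Walk

variable {M : ℕ}

lemma absorbingReflectingWalk_nonneg (i j : Fin (M + 1)) :
    0 ≤ absorbingReflectingWalk M i j := by
  unfold absorbingReflectingWalk
  split_ifs <;> norm_num

lemma step_absorbingReflectingWalk_of_val_eq_zero (u : ℝ → ℝ) {i : Fin (M + 1)}
    (hi : (i : ℕ) = 0) :
    step (absorbingReflectingWalk M) (fun j => u (j : ℕ)) i = u (i : ℕ) := by
  unfold step
  rw [Fintype.sum_eq_single i fun j hj => by simp [absorbingReflectingWalk, hi, hj]]
  simp [absorbingReflectingWalk, hi]

lemma step_absorbingReflectingWalk_of_val_eq_top (hM : 1 ≤ M) (u : ℝ → ℝ) {i : Fin (M + 1)}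
    (hi : (i : ℕ) = M) :
    step (absorbingReflectingWalk M) (fun j => u (j : ℕ)) i = u (M - 1) := by
  unfold step
  rw [Fintype.sum_eq_single ⟨M - 1, by omega⟩ fun j hj => by
    simp only [ne_eq, Fin.ext_iff] at hj
    simp [absorbingReflectingWalk, hi, show M ≠ 0 by omega, show (j : ℕ) + 1 ≠ M by omega]]
  simp [absorbingReflectingWalk, hi, show M ≠ 0 by omega, Nat.sub_add_cancel hM, Nat.cast_sub hM]

lemma step_absorbingReflectingWalk_of_interior (u : ℝ → ℝ) {i : Fin (M + 1)}
    (h0 : (i : ℕ) ≠ 0) (hT : (i : ℕ) ≠ M) :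
    step (absorbingReflectingWalk M) (fun j => u (j : ℕ)) i
      = (u ((i : ℕ) + 1) + u ((i : ℕ) - 1)) / 2 := by
  unfold step
  rw [Fintype.sum_eq_add ⟨(i : ℕ) + 1, by omega⟩ ⟨(i : ℕ) - 1, by omega⟩
    (by simp [Fin.ext_iff]; omega) fun j hj => by
      simp [absorbingReflectingWalk, h0, hT, Fin.ext_iff] at hj ⊢; omega]
  simp [absorbingReflectingWalk, h0, hT, Nat.cast_sub (Nat.one_le_iff_ne_zero.2 h0),
    Nat.sub_add_cancel (Nat.one_le_iff_ne_zero.2 h0)]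
  ring

lemma varianceStrategy_le_one (i : Fin (M + 1)) : varianceStrategy M i ≤ 1 := by
  unfold varianceStrategy
  split_ifs
  · exact le_rfl
  · exact div_le_one_of_le₀ (by linarith [(M.cast_nonneg : (0 : ℝ) ≤ M)]) (by positivity)
  · exact zero_le_one

-- The weight `M² + 1 - (M - i)²` drops by exactly `1` in expectation at interior states.
lemma varianceStrategy_contraction (hM : 1 ≤ M) (i : Fin (M + 1)) :
    (1 - varianceStrategy M i) *
        step (absorbingReflectingWalk M) (fun j => (M : ℝ) ^ 2 + 1 - (M - (j : ℕ)) ^ 2) i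
      ≤ (M : ℝ) ^ 2 / ((M : ℝ) ^ 2 + 1) * ((M : ℝ) ^ 2 + 1 - (M - (i : ℕ)) ^ 2) := by
  obtain h0 | hT | ⟨h0, hT⟩ : (i : ℕ) = 0 ∨ (i : ℕ) = M ∨ ((i : ℕ) ≠ 0 ∧ (i : ℕ) ≠ M) := by
    omega
  · simp only [varianceStrategy, h0, if_true, sub_self, zero_mul]
    exact mul_nonneg (by positivity) (by simp)
  · rw [step_absorbingReflectingWalk_of_val_eq_top hM
      (fun t => (M : ℝ) ^ 2 + 1 - (M - t) ^ 2) hT]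
    simp only [varianceStrategy, hT, show M ≠ 0 by omega, if_false, if_true, sub_self]
    field_simp
    nlinarith [sq_nonneg (M : ℝ)]
  · rw [step_absorbingReflectingWalk_of_interior
      (fun t => (M : ℝ) ^ 2 + 1 - (M - t) ^ 2) h0 hT]
    simp only [varianceStrategy, h0, hT, if_false, sub_zero, one_mul]
    rw [div_mul_eq_mul_div, le_div_iff₀ (by positivity)]
    nlinarith [sq_nonneg ((M : ℝ) - (i : ℕ))]

lemma phi_varianceStrategy_eq (hM : 1 ≤ M) {f u : ℝ → ℝ} (h0 : u 0 = f 0)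
    (htop : ((M : ℝ) + 1) * u M = f M + M * u (M - 1))
    (hharm : ∀ k : ℕ, 0 < k → k < M → 2 * u k = u (k + 1) + u (k - 1)) (i : Fin (M + 1)) :
    phi (absorbingReflectingWalk M) (varianceStrategy M) (fun j => f (j : ℕ)) i = u (i : ℕ) := by
  have hM' : (1 : ℝ) ≤ M := by exact_mod_cast hM
  have hθ : (M : ℝ) ^ 2 / ((M : ℝ) ^ 2 + 1) < 1 := (div_lt_one (by positivity)).2 (by linarith)
  have hw (j : Fin (M + 1)) : 1 ≤ (M : ℝ) ^ 2 + 1 - (M - (j : ℕ)) ^ 2 := by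
    have hj : ((j : ℕ) : ℝ) ≤ M := by exact_mod_cast Fin.is_le j
    have hj₀ : (0 : ℝ) ≤ (j : ℕ) := Nat.cast_nonneg _
    nlinarith
  refine phi_eq_of_contraction (v := fun j : Fin (M + 1) => u (j : ℕ))
    absorbingReflectingWalk_nonneg varianceStrategy_le_one (by positivity) hθ hw
    (varianceStrategy_contraction hM) (fun x => ?_) i
  obtain hx0 | hT | ⟨hx0, hT⟩ : (x : ℕ) = 0 ∨ (x : ℕ) = M ∨ ((x : ℕ) ≠ 0 ∧ (x : ℕ) ≠ M) := by
    omega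
  · simp [varianceStrategy, hx0, h0]
  · rw [step_absorbingReflectingWalk_of_val_eq_top hM u hT]
    simp only [varianceStrategy, hT, show M ≠ 0 by omega, if_false, if_true]
    field_simp
    linarith
  · rw [step_absorbingReflectingWalk_of_interior u hx0 hT]
    simp only [varianceStrategy, hx0, hT, if_false, zero_mul, zero_add, sub_zero, one_mul]
    linarith [hharm x (Nat.pos_of_ne_zero hx0) (lt_of_le_of_ne (Fin.is_le x) hT)]

lemma phi_varianceStrategy_sq (hM : 1 ≤ M) (i : Fin (M + 1)) :
    phi (absorbingReflectingWalk M) (varianceStrategy M) (fun j => ((j : ℕ) : ℝ) ^ 2) i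
      = M * (i : ℕ) / 2 :=
  phi_varianceStrategy_eq (f := fun t => t ^ 2) (u := fun t => M * t / 2) hM (by simp)
    (by field_simp; ring) (fun _ _ _ => by ring) i

lemma phi_varianceStrategy_id (hM : 1 ≤ M) (i : Fin (M + 1)) :
    phi (absorbingReflectingWalk M) (varianceStrategy M) (fun j => ((j : ℕ) : ℝ)) i
      = (i : ℕ) / 2 :=
  phi_varianceStrategy_eq (f := fun t => t) (u := fun t => t / 2) hM (by simp)
    (by field_simp; ring) (fun _ _ _ => by ring) i

lemma Jval_varianceStrategy (hM : 1 ≤ M) (i : Fin (M + 1)) :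
    Jval (absorbingReflectingWalk M) (fun i => ((i : ℕ) : ℝ) ^ 2) (fun i => ((i : ℕ) : ℝ))
        (fun t => -t ^ 2) (varianceStrategy M) i
      = ((i : ℕ) : ℝ) * M / 2 - (((i : ℕ) : ℝ) / 2) ^ 2 := by
  rw [Jval, phi_varianceStrategy_sq hM, phi_varianceStrategy_id hM]
  ring

theorem isEquilibrium_varianceStrategy (hM : 1 ≤ M) :
    IsEquilibrium (absorbingReflectingWalk M) (fun i => ((i : ℕ) : ℝ) ^ 2)
      (fun i => ((i : ℕ) : ℝ)) (fun t => -t ^ 2) (varianceStrategy M) := by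
  rintro x q ⟨hq₀, -⟩
  have hφ := funext (phi_varianceStrategy_sq hM)
  have hψ := funext (phi_varianceStrategy_id hM)
  rw [Kval, Jval, hφ, hψ]
  have hx : ((x : ℕ) : ℝ) ≤ M := by exact_mod_cast Fin.is_le x
  have hx₀ : (0 : ℝ) ≤ (x : ℕ) := Nat.cast_nonneg _
  obtain h0 | hT | ⟨h0, hT⟩ : (x : ℕ) = 0 ∨ (x : ℕ) = M ∨ ((x : ℕ) ≠ 0 ∧ (x : ℕ) ≠ M) := by
    omega
  · rw [step_absorbingReflectingWalk_of_val_eq_zero (fun t => M * t / 2) h0,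
      step_absorbingReflectingWalk_of_val_eq_zero (fun t => t / 2) h0]
    simp [h0]
  · rw [step_absorbingReflectingWalk_of_val_eq_top hM (fun t => M * t / 2) hT,
      step_absorbingReflectingWalk_of_val_eq_top hM (fun t => t / 2) hT]
    beta_reduce
    rw [hT]
    -- with `s = q M + (1 - q) (M - 1) / 2` the gap is `M² / 4 - s (M - s) ≥ 0`
    nlinarith [sq_nonneg (2 * (q * M + (1 - q) * ((M - 1) / 2)) - M)]
  · rw [step_absorbingReflectingWalk_of_interior (fun t => M * t / 2) h0 hT,
      step_absorbingReflectingWalk_of_interior (fun t => t / 2) h0 hT]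
    beta_reduce
    -- the gap is `q x (M - x) / 2 + (q x / 2)²`
    nlinarith [mul_nonneg (mul_nonneg hq₀ hx₀) (sub_nonneg.2 hx), sq_nonneg (q * (x : ℕ))]

end Walk

/-- Section 6.2 (the variance problem): for the random walk on `{0,1,…,M}` with `0`
absorbing and `M` reflecting, and the variance problem `f(x) = x²`, `g(x) = -x²`,
`h(x) = x`, the strategy `p̂ = (1,0,…,0,1/(M+1))` is an equilibrium with equilibrium
value function `J_p̂(i) = iM/2 - (i/2)² (= Var_i(X_{τ_p̂}))`. -/
theorem variance_problem_equilibrium (M : ℕ) (hM : 1 ≤ M)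
    (P : Fin (M + 1) → Fin (M + 1) → ℝ)
    (hP : ∀ i j : Fin (M + 1), P i j =
      if (i : ℕ) = 0 then (if j = i then 1 else 0)
      else if (i : ℕ) = M then (if (j : ℕ) + 1 = M then 1 else 0)
      else if (j : ℕ) = (i : ℕ) + 1 ∨ (j : ℕ) + 1 = (i : ℕ) then 1 / 2 else 0)
    (phat : Fin (M + 1) → ℝ)
    (hphat : ∀ i : Fin (M + 1), phat i =
      if (i : ℕ) = 0 then 1 else if (i : ℕ) = M then 1 / ((M : ℝ) + 1) else 0) :
    IsEquilibrium P (fun i => ((i : ℕ) : ℝ) ^ 2) (fun i => ((i : ℕ) : ℝ))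
        (fun t => -t ^ 2) phat ∧
      ∀ i : Fin (M + 1),
        Jval P (fun i => ((i : ℕ) : ℝ) ^ 2) (fun i => ((i : ℕ) : ℝ))
            (fun t => -t ^ 2) phat i
          = ((i : ℕ) : ℝ) * M / 2 - (((i : ℕ) : ℝ) / 2) ^ 2 := by
  obtain rfl : P = absorbingReflectingWalk M := funext fun i => funext (hP i)
  obtain rfl : phat = varianceStrategy M := funext hphat
  exact ⟨isEquilibrium_varianceStrategy hM, Jval_varianceStrategy hM⟩
end

section
/- (Non-uniqueness of equilibria) Let X be the Markov chain on E = {1, 2} where state 2 is absorbing and from state 1 the chain moves to state 2 with probability 1/2 and stays at state 1 with probability 1/2. Consider the mean-variance problem f(x) = −γx², g(x) = x + γx², h(x) = x with a parameter γ > 2. Then both p̂ = (1,1) and p̃ = (0,1) are equilibria, with distinct equilibrium value functions J_p̂ = (1,2) and J_p̃ = (2,2). In particular an equilibrium value function is not unique in general. -/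
/-!
Analytic model of the time-inconsistent stopping framework of Christensen & Lindensjö,
"Time-inconsistent stopping, myopic adjustment & equilibrium stability".

A time-homogeneous Markov chain `X` on a finite state space `E` is encoded by its
transition matrix `P` (`P x y = P_x(X_1 = y)`).  A mixed stopping strategy is a vector
`p ∈ [0,1]^E`; the associated stopping time is `τ_p = min {n ≥ 0 : Y_n ≤ p_{X_n}}`,
where the `Y_n` are i.i.d. uniform randomization devices.  The quantity
`phi P p f x = E_x[f(X_{τ_p})]` (with the convention `f(X_{τ_p}) := lim_n f(X_n)` on
`{τ_p = ∞}`, the limit existing a.s. by absorption) is realized analytically, via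
dominated convergence, as the limit in `n` of the finite-horizon values
`phiSeq P p f n x = E_x[f(X_{τ_p ∧ n})]`, which satisfy the one-step recursion given
by the Markov property.  Likewise `step P v x = E_x[v(X_1)]`.
-/

open Filter

variable {E : Type*}

lemma phiSeq_one_eq [Fintype E] (P : E → E → ℝ) (f : E → ℝ) :
    ∀ n, phiSeq P (fun _ => 1) f n = f := by
  intro n
  induction n with
  | zero => rfl
  | succ n ih => funext x; simp [phiSeq, ih]

lemma phi_one_eq [Fintype E] (P : E → E → ℝ) (f : E → ℝ) : phi P (fun _ => 1) f = f := by
  funext x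
  simp only [phi, phiSeq_one_eq]
  exact tendsto_const_nhds.limUnder_eq

lemma phiSeq_tilde_one (f : Fin 2 → ℝ) :
    ∀ n, phiSeq ![![1 / 2, 1 / 2], ![0, 1]] ![0, 1] f n 1 = f 1 := by
  intro n
  induction n with
  | zero => rfl
  | succ n ih =>
    simp [phiSeq, step, Fin.sum_univ_two, ih]

lemma phiSeq_tilde_zero (f : Fin 2 → ℝ) :
    ∀ n, phiSeq ![![1 / 2, 1 / 2], ![0, 1]] ![0, 1] f n 0
      = f 1 + (1 / 2 : ℝ) ^ n * (f 0 - f 1) := by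
  intro n
  induction n with
  | zero => simp [phiSeq]
  | succ n ih =>
    simp only [phiSeq, step, Fin.sum_univ_two, ih, phiSeq_tilde_one]
    norm_num [Matrix.cons_val_zero, Matrix.cons_val_one]
    ring

lemma phi_tilde_zero (f : Fin 2 → ℝ) :
    phi ![![1 / 2, 1 / 2], ![0, 1]] ![0, 1] f 0 = f 1 := by
  have h : Tendsto (fun n : ℕ => f 1 + (1 / 2 : ℝ) ^ n * (f 0 - f 1)) atTop (nhds (f 1)) := by
    have h0 : Tendsto (fun n : ℕ => (1 / 2 : ℝ) ^ n) atTop (nhds 0) :=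
      tendsto_pow_atTop_nhds_zero_of_lt_one (by norm_num) (by norm_num)
    have := (tendsto_const_nhds : Tendsto (fun _ : ℕ => f 1) atTop (nhds (f 1))).add
      (h0.mul_const (f 0 - f 1))
    simpa using this
  simp only [phi, phiSeq_tilde_zero]
  exact h.limUnder_eq

lemma phi_tilde_one (f : Fin 2 → ℝ) :
    phi ![![1 / 2, 1 / 2], ![0, 1]] ![0, 1] f 1 = f 1 := by
  simp only [phi, phiSeq_tilde_one]
  exact tendsto_const_nhds.limUnder_eq

lemma phi_tilde_eq (f : Fin 2 → ℝ) :
    phi ![![1 / 2, 1 / 2], ![0, 1]] ![0, 1] f = fun _ => f 1 := by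
  funext x
  fin_cases x
  · exact phi_tilde_zero f
  · exact phi_tilde_one f

/-- Example 6.1 (two different equilibria): for the chain on `{1,2}` (encoded as
`Fin 2`, with state `i` carrying the value `i+1`) where `2` is absorbing and from `1`
the chain moves to `2` or stays, each with probability `1/2`, and the mean-variance
problem `f(x) = -γx²`, `g(x) = x + γx²`, `h(x) = x` with `γ > 2`: both `p̂ = (1,1)`
and `p̃ = (0,1)` are equilibria, with distinct value functions `J_p̂ = (1,2)` and
`J_p̃ = (2,2)`. -/
theorem two_different_equilibria (γ : ℝ) (hγ : 2 < γ)
    (P : Fin 2 → Fin 2 → ℝ) (hP : P = ![![1 / 2, 1 / 2], ![0, 1]]) :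
    IsEquilibrium P (fun i => -γ * (((i : ℕ) : ℝ) + 1) ^ 2)
        (fun i => ((i : ℕ) : ℝ) + 1) (fun t => t + γ * t ^ 2) (fun _ => 1) ∧
      IsEquilibrium P (fun i => -γ * (((i : ℕ) : ℝ) + 1) ^ 2)
        (fun i => ((i : ℕ) : ℝ) + 1) (fun t => t + γ * t ^ 2) ![0, 1] ∧
      (∀ i : Fin 2,
        Jval P (fun i => -γ * (((i : ℕ) : ℝ) + 1) ^ 2) (fun i => ((i : ℕ) : ℝ) + 1)
          (fun t => t + γ * t ^ 2) (fun _ => 1) i = ((i : ℕ) : ℝ) + 1) ∧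
      (∀ i : Fin 2,
        Jval P (fun i => -γ * (((i : ℕ) : ℝ) + 1) ^ 2) (fun i => ((i : ℕ) : ℝ) + 1)
          (fun t => t + γ * t ^ 2) ![0, 1] i = 2) := by
  subst hP
  refine ⟨?_, ?_, ?_, ?_⟩
  · intro x q hq
    obtain ⟨hq0, hq1⟩ := hq
    fin_cases x <;>
      simp only [Kval, Jval, phi_one_eq, step, Fin.sum_univ_two] <;>
      norm_num <;> nlinarith [sq_nonneg q, sq_nonneg (1 - q), mul_nonneg hq0 (sub_nonneg.2 hq1)]
  · intro x q hq
    obtain ⟨hq0, hq1⟩ := hq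
    fin_cases x <;>
      simp only [Kval, Jval, phi_tilde_eq, step, Fin.sum_univ_two] <;>
      norm_num <;> nlinarith [sq_nonneg q, sq_nonneg (1 - q), mul_nonneg hq0 (sub_nonneg.2 hq1)]
  · intro i
    fin_cases i <;> simp [Jval, phi_one_eq] <;> ring
  · intro i
    fin_cases i <;> simp only [Jval, phi_tilde_eq] <;> norm_num <;> ring
end

section
/- (Non-existence of equilibria) Let X be the Markov chain on E = {x₁, x₂, x₃, x₄} = {0.39, 0.52, 0.70, 0.97} where x₁ and x₄ are absorbing and from each of x₂ and x₃ the chain moves to the neighboring state above or below each with probability 1/2. For the mean-variance problem f(x) = −x², g(x) = x + x², h(x) = x (i.e. γ = 1), there exists no equilibrium. -/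
/-!
Analytic model of the time-inconsistent stopping framework of Christensen & Lindensjö,
"Time-inconsistent stopping, myopic adjustment & equilibrium stability".

A time-homogeneous Markov chain `X` on a finite state space `E` is encoded by its
transition matrix `P` (`P x y = P_x(X_1 = y)`).  A mixed stopping strategy is a vector
`p ∈ [0,1]^E`; the associated stopping time is `τ_p = min {n ≥ 0 : Y_n ≤ p_{X_n}}`,
where the `Y_n` are i.i.d. uniform randomization devices.  The quantity
`phi P p f x = E_x[f(X_{τ_p})]` (with the convention `f(X_{τ_p}) := lim_n f(X_n)` on
`{τ_p = ∞}`, the limit existing a.s. by absorption) is realized analytically, via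
dominated convergence, as the limit in `n` of the finite-horizon values
`phiSeq P p f n x = E_x[f(X_{τ_p ∧ n})]`, which satisfy the one-step recursion given
by the Markov property.  Likewise `step P v x = E_x[v(X_1)]`.
-/

open Filter

variable {E : Type*}

/-- Auxiliary: solving the two-variable fixed-point system. -/
lemma exists_fp (a b w0 w1 w2 w3 : ℝ) (hD : 1 - (1 - a) * (1 - b) / 4 ≠ 0) :
    ∃ u1 u2 : ℝ, u1 = a * w1 + (1 - a) * ((w0 + u2) / 2) ∧
      u2 = b * w2 + (1 - b) * ((u1 + w3) / 2) := by
  set N := a * w1 + (1 - a) * w0 / 2 + (1 - a) / 2 * (b * w2 + (1 - b) * w3 / 2) with hN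
  set u1 := N / (1 - (1 - a) * (1 - b) / 4) with hu1
  have hu1D : u1 * (1 - (1 - a) * (1 - b) / 4) = N := div_mul_cancel₀ N hD
  refine ⟨u1, b * w2 + (1 - b) * ((u1 + w3) / 2), ?_, rfl⟩
  linear_combination hu1D

/-- Auxiliary: the value function `phi` of the concrete chain is given by the
fixed point of the one-step recursion. -/
lemma phi_eq_aux (P : Fin 4 → Fin 4 → ℝ)
    (hP : P = ![![1, 0, 0, 0], ![1 / 2, 0, 1 / 2, 0],
      ![0, 1 / 2, 0, 1 / 2], ![0, 0, 0, 1]])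
    (p : Fin 4 → ℝ) (hp : IsStrategy p) (w : Fin 4 → ℝ) (u1 u2 : ℝ)
    (h1 : u1 = p 1 * w 1 + (1 - p 1) * ((w 0 + u2) / 2))
    (h2 : u2 = p 2 * w 2 + (1 - p 2) * ((u1 + w 3) / 2)) :
    phi P p w 0 = w 0 ∧ phi P p w 1 = u1 ∧ phi P p w 2 = u2 ∧ phi P p w 3 = w 3 := by
  subst hP
  set P : Fin 4 → Fin 4 → ℝ := ![![1, 0, 0, 0], ![1 / 2, 0, 1 / 2, 0],
      ![0, 1 / 2, 0, 1 / 2], ![0, 0, 0, 1]] with hPdef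
  have hs0 : ∀ v : Fin 4 → ℝ, step P v 0 = v 0 := by
    intro v; simp [step, Fin.sum_univ_four, hPdef]
  have hs1 : ∀ v : Fin 4 → ℝ, step P v 1 = (v 0 + v 2) / 2 := by
    intro v; simp [step, Fin.sum_univ_four, hPdef]; ring
  have hs2 : ∀ v : Fin 4 → ℝ, step P v 2 = (v 1 + v 3) / 2 := by
    intro v; simp [step, Fin.sum_univ_four, hPdef]; ring
  have hs3 : ∀ v : Fin 4 → ℝ, step P v 3 = v 3 := by
    intro v; simp [step, Fin.sum_univ_four, hPdef]
  have hA0 : ∀ n, phiSeq P p w n 0 = w 0 := by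
    intro n; induction n with
    | zero => rfl
    | succ n ih => simp only [phiSeq]; rw [hs0, ih]; ring
  have hA3 : ∀ n, phiSeq P p w n 3 = w 3 := by
    intro n; induction n with
    | zero => rfl
    | succ n ih => simp only [phiSeq]; rw [hs3, ih]; ring
  obtain ⟨hp10, hp11⟩ := hp 1
  obtain ⟨hp20, hp21⟩ := hp 2
  set M : ℝ := |w 1 - u1| + |w 2 - u2| with hM
  have key : ∀ n, |phiSeq P p w n 1 - u1| ≤ M * (1 / 2) ^ n ∧
      |phiSeq P p w n 2 - u2| ≤ M * (1 / 2) ^ n := by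
    intro n; induction n with
    | zero =>
      simp only [phiSeq, pow_zero, mul_one, hM]
      constructor
      · linarith [abs_nonneg (w 2 - u2)]
      · linarith [abs_nonneg (w 1 - u1)]
    | succ n ih =>
      obtain ⟨ih1, ih2⟩ := ih
      have e1 : phiSeq P p w (n + 1) 1 - u1
          = (1 - p 1) / 2 * (phiSeq P p w n 2 - u2) := by
        simp only [phiSeq]; rw [hs1, hA0 n, h1]; ring
      have e2 : phiSeq P p w (n + 1) 2 - u2
          = (1 - p 2) / 2 * (phiSeq P p w n 1 - u1) := by
        simp only [phiSeq]; rw [hs2, hA3 n, h2]; ring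
      constructor
      · rw [e1, abs_mul]
        have hb : |(1 - p 1) / 2| ≤ 1 / 2 := by
          rw [abs_of_nonneg (by linarith)]; linarith
        calc |(1 - p 1) / 2| * |phiSeq P p w n 2 - u2| ≤ (1 / 2) * (M * (1 / 2) ^ n) :=
              mul_le_mul hb ih2 (abs_nonneg _) (by norm_num)
          _ = M * (1 / 2) ^ (n + 1) := by ring
      · rw [e2, abs_mul]
        have hb : |(1 - p 2) / 2| ≤ 1 / 2 := by
          rw [abs_of_nonneg (by linarith)]; linarith
        calc |(1 - p 2) / 2| * |phiSeq P p w n 1 - u1| ≤ (1 / 2) * (M * (1 / 2) ^ n) :=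
              mul_le_mul hb ih1 (abs_nonneg _) (by norm_num)
          _ = M * (1 / 2) ^ (n + 1) := by ring
  have hM0 : Tendsto (fun n : ℕ => M * (1 / 2 : ℝ) ^ n) atTop (nhds 0) := by
    have h := (tendsto_pow_atTop_nhds_zero_of_lt_one (by norm_num : (0:ℝ) ≤ 1 / 2)
      (by norm_num)).const_mul M
    simpa using h
  have ht1 : Tendsto (fun n => phiSeq P p w n 1) atTop (nhds u1) := by
    rw [← tendsto_sub_nhds_zero_iff]
    exact squeeze_zero_norm (fun n => by simpa [Real.norm_eq_abs] using (key n).1) hM0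
  have ht2 : Tendsto (fun n => phiSeq P p w n 2) atTop (nhds u2) := by
    rw [← tendsto_sub_nhds_zero_iff]
    exact squeeze_zero_norm (fun n => by simpa [Real.norm_eq_abs] using (key n).2) hM0
  refine ⟨?_, ht1.limUnder_eq, ht2.limUnder_eq, ?_⟩
  · exact Filter.Tendsto.limUnder_eq (by simp only [hA0]; exact tendsto_const_nhds)
  · exact Filter.Tendsto.limUnder_eq (by simp only [hA3]; exact tendsto_const_nhds)

set_option maxHeartbeats 1600000 in
/-- Example 6.2 (no equilibrium): for the chain on `{0.39, 0.52, 0.70, 0.97}` (encoded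
as `Fin 4`) with the two extreme states absorbing and the middle states moving to a
neighbor with probability `1/2` each, the mean-variance problem with `γ = 1`
(`f(x) = -x²`, `g(x) = x + x²`, `h(x) = x`) admits no equilibrium. -/
theorem no_equilibrium
    (P : Fin 4 → Fin 4 → ℝ)
    (hP : P = ![![1, 0, 0, 0], ![1 / 2, 0, 1 / 2, 0],
      ![0, 1 / 2, 0, 1 / 2], ![0, 0, 0, 1]]) :
    ¬ ∃ p : Fin 4 → ℝ, IsStrategy p ∧
      IsEquilibrium P (fun i => -(![0.39, 0.52, 0.70, 0.97] i) ^ 2)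
        ![0.39, 0.52, 0.70, 0.97]
        (fun t => t + t ^ 2) p := by
  rintro ⟨p, hp, heq⟩
  obtain ⟨ha0, ha1⟩ := hp 1
  obtain ⟨hb0, hb1⟩ := hp 2
  have hDpos : (0:ℝ) < 1 - (1 - p 1) * (1 - p 2) / 4 := by
    have hm : (1 - p 1) * (1 - p 2) ≤ 1 :=
      mul_le_one₀ (by linarith only [ha0]) (by linarith only [hb1]) (by linarith only [hb0])
    linarith only [hm]
  obtain ⟨u1, u2, hu1, hu2⟩ := exists_fp (p 1) (p 2) (-(0.39:ℝ) ^ 2) (-(0.52:ℝ) ^ 2)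
    (-(0.70:ℝ) ^ 2) (-(0.97:ℝ) ^ 2) (ne_of_gt hDpos)
  obtain ⟨v1, v2, hv1, hv2⟩ := exists_fp (p 1) (p 2) (0.39:ℝ) 0.52 0.70 0.97
    (ne_of_gt hDpos)
  obtain ⟨pF0, pF1, pF2, pF3⟩ := phi_eq_aux P hP p hp
    (fun i => -(![0.39, 0.52, 0.70, 0.97] i) ^ 2) u1 u2 hu1 hu2
  obtain ⟨pH0, pH1, pH2, pH3⟩ := phi_eq_aux P hP p hp
    ![0.39, 0.52, 0.70, 0.97] v1 v2 hv1 hv2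
  have hstep1 : ∀ v : Fin 4 → ℝ, step P v 1 = (v 0 + v 2) / 2 := by
    intro v; simp [step, Fin.sum_univ_four, hP]; ring
  have hstep2 : ∀ v : Fin 4 → ℝ, step P v 2 = (v 1 + v 3) / 2 := by
    intro v; simp [step, Fin.sum_univ_four, hP]; ring
  have hsF1 : step P (phi P p (fun i => -(![0.39, 0.52, 0.70, 0.97] i) ^ 2)) 1
      = (-(0.39:ℝ) ^ 2 + u2) / 2 := by rw [hstep1, pF0, pF2]; exact rfl
  have hsF2 : step P (phi P p (fun i => -(![0.39, 0.52, 0.70, 0.97] i) ^ 2)) 2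
      = (u1 + -(0.97:ℝ) ^ 2) / 2 := by rw [hstep2, pF1, pF3]; exact rfl
  have hsH1 : step P (phi P p ![0.39, 0.52, 0.70, 0.97]) 1
      = ((0.39:ℝ) + v2) / 2 := by rw [hstep1, pH0, pH2]; exact rfl
  have hsH2 : step P (phi P p ![0.39, 0.52, 0.70, 0.97]) 2
      = (v1 + (0.97:ℝ)) / 2 := by rw [hstep2, pH1, pH3]; exact rfl
  have hK1 : ∀ q : ℝ, Kval P (fun i => -(![0.39, 0.52, 0.70, 0.97] i) ^ 2)
      ![0.39, 0.52, 0.70, 0.97] (fun t => t + t ^ 2) p 1 q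
      = q * (-(0.52:ℝ) ^ 2) + (1 - q) * ((-(0.39:ℝ) ^ 2 + u2) / 2)
        + ((q * 0.52 + (1 - q) * ((0.39 + v2) / 2))
            + (q * 0.52 + (1 - q) * ((0.39 + v2) / 2)) ^ 2) := by
    intro q; unfold Kval; rw [hsF1, hsH1]; exact rfl
  have hK2 : ∀ q : ℝ, Kval P (fun i => -(![0.39, 0.52, 0.70, 0.97] i) ^ 2)
      ![0.39, 0.52, 0.70, 0.97] (fun t => t + t ^ 2) p 2 q
      = q * (-(0.70:ℝ) ^ 2) + (1 - q) * ((u1 + -(0.97:ℝ) ^ 2) / 2)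
        + ((q * 0.70 + (1 - q) * ((v1 + 0.97) / 2))
            + (q * 0.70 + (1 - q) * ((v1 + 0.97) / 2)) ^ 2) := by
    intro q; unfold Kval; rw [hsF2, hsH2]; exact rfl
  have hJ1 : Jval P (fun i => -(![0.39, 0.52, 0.70, 0.97] i) ^ 2)
      ![0.39, 0.52, 0.70, 0.97] (fun t => t + t ^ 2) p 1 = u1 + (v1 + v1 ^ 2) := by
    unfold Jval; rw [pF1, pH1]
  have hJ2 : Jval P (fun i => -(![0.39, 0.52, 0.70, 0.97] i) ^ 2)
      ![0.39, 0.52, 0.70, 0.97] (fun t => t + t ^ 2) p 2 = u2 + (v2 + v2 ^ 2) := by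
    unfold Jval; rw [pF2, pH2]
  have m0 : (0:ℝ) ∈ Set.Icc (0:ℝ) 1 := Set.mem_Icc.mpr ⟨le_refl 0, zero_le_one⟩
  have m1 : (1:ℝ) ∈ Set.Icc (0:ℝ) 1 := Set.mem_Icc.mpr ⟨zero_le_one, le_refl 1⟩
  have I1 : -(0.52:ℝ) ^ 2 + (0.52 + 0.52 ^ 2) ≤ u1 + (v1 + v1 ^ 2) := by
    have h := heq 1 1 m1; rw [hK1 1, hJ1] at h; linarith only [h]
  have I2 : (-(0.39:ℝ) ^ 2 + u2) / 2 + ((0.39 + v2) / 2 + ((0.39 + v2) / 2) ^ 2)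
      ≤ u1 + (v1 + v1 ^ 2) := by
    have h := heq 1 0 m0; rw [hK1 0, hJ1] at h; linarith only [h]
  have I3 : -(0.70:ℝ) ^ 2 + (0.70 + 0.70 ^ 2) ≤ u2 + (v2 + v2 ^ 2) := by
    have h := heq 2 1 m1; rw [hK2 1, hJ2] at h; linarith only [h]
  have I4 : (u1 + -(0.97:ℝ) ^ 2) / 2 + ((v1 + 0.97) / 2 + ((v1 + 0.97) / 2) ^ 2)
      ≤ u2 + (v2 + v2 ^ 2) := by
    have h := heq 2 0 m0; rw [hK2 0, hJ2] at h; linarith only [h]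
  -- convexity identities force pure or degenerate strategies
  have hid1 : p 1 * (1 - p 1) * (0.52 - (0.39 + v2) / 2) ^ 2
      = p 1 * ((-(0.52:ℝ) ^ 2 + (0.52 + 0.52 ^ 2)) - (u1 + (v1 + v1 ^ 2)))
        + (1 - p 1) * (((-(0.39:ℝ) ^ 2 + u2) / 2
            + ((0.39 + v2) / 2 + ((0.39 + v2) / 2) ^ 2)) - (u1 + (v1 + v1 ^ 2))) := by
    rw [hu1, hv1]; ring
  have hid2 : p 2 * (1 - p 2) * (0.70 - (v1 + 0.97) / 2) ^ 2
      = p 2 * ((-(0.70:ℝ) ^ 2 + (0.70 + 0.70 ^ 2)) - (u2 + (v2 + v2 ^ 2)))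
        + (1 - p 2) * (((u1 + -(0.97:ℝ) ^ 2) / 2
            + ((v1 + 0.97) / 2 + ((v1 + 0.97) / 2) ^ 2)) - (u2 + (v2 + v2 ^ 2))) := by
    rw [hu2, hv2]; ring
  have t1 := mul_nonneg ha0 (sub_nonneg.mpr I1)
  have t2 := mul_nonneg (by linarith : (0:ℝ) ≤ 1 - p 1) (sub_nonneg.mpr I2)
  have t3 := mul_nonneg hb0 (sub_nonneg.mpr I3)
  have t4 := mul_nonneg (by linarith : (0:ℝ) ≤ 1 - p 2) (sub_nonneg.mpr I4)
  have key1 : p 1 * (1 - p 1) * (0.52 - (0.39 + v2) / 2) ^ 2 ≤ 0 := by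
    rw [hid1]; linarith only [t1, t2]
  have key2 : p 2 * (1 - p 2) * (0.70 - (v1 + 0.97) / 2) ^ 2 ≤ 0 := by
    rw [hid2]; linarith only [t3, t4]
  have hC1 : p 1 = 0 ∨ p 1 = 1 ∨ (0.39 + v2) / 2 = 0.52 := by
    by_contra hc
    push_neg at hc
    obtain ⟨h1, h2, h3⟩ := hc
    have hp1 : 0 < p 1 := lt_of_le_of_ne ha0 (Ne.symm h1)
    have hp2 : p 1 < 1 := lt_of_le_of_ne ha1 h2
    have hne : (0.52:ℝ) - (0.39 + v2) / 2 ≠ 0 := fun h => h3 (by linarith only [h])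
    have hsq : 0 < ((0.52:ℝ) - (0.39 + v2) / 2) ^ 2 := by
      rcases lt_or_gt_of_ne hne with h | h
      · nlinarith only [h]
      · nlinarith only [h]
    have hprod := mul_pos (mul_pos hp1 (by linarith only [hp2] : (0:ℝ) < 1 - p 1)) hsq
    linarith only [key1, hprod]
  have hC2 : p 2 = 0 ∨ p 2 = 1 ∨ (v1 + 0.97) / 2 = 0.70 := by
    by_contra hc
    push_neg at hc
    obtain ⟨h1, h2, h3⟩ := hc
    have hp1 : 0 < p 2 := lt_of_le_of_ne hb0 (Ne.symm h1)
    have hp2 : p 2 < 1 := lt_of_le_of_ne hb1 h2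
    have hne : (0.70:ℝ) - (v1 + 0.97) / 2 ≠ 0 := fun h => h3 (by linarith only [h])
    have hsq : 0 < ((0.70:ℝ) - (v1 + 0.97) / 2) ^ 2 := by
      rcases lt_or_gt_of_ne hne with h | h
      · nlinarith only [h]
      · nlinarith only [h]
    have hprod := mul_pos (mul_pos hp1 (by linarith only [hp2] : (0:ℝ) < 1 - p 2)) hsq
    linarith only [key2, hprod]
  rcases hC1 with ha' | ha' | hC1'
  · rcases hC2 with hb' | hb' | hC2'
    · -- p 1 = 0, p 2 = 0 : use I1
      rw [ha'] at hu1 hv1; rw [hb'] at hu2 hv2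
      have e1 : v1 = 7 / 12 := by linarith only [hv1, hv2]
      have e3 : u1 = -12451 / 30000 := by linarith only [hu1, hu2]
      have e4 : v1 ^ 2 = 49 / 144 := by rw [e1]; norm_num
      linarith only [I1, e1, e3, e4]
    · -- p 1 = 0, p 2 = 1 : use I4
      rw [ha'] at hu1 hv1; rw [hb'] at hu2 hv2
      have e2 : v2 = 0.70 := by linarith only [hv2]
      have e1 : v1 = 0.545 := by linarith only [hv1, e2]
      have e4 : u2 = -0.49 := by linarith only [hu2]
      have e3 : u1 = -0.32105 := by linarith only [hu1, e4]
      have s1 : v1 ^ 2 = 0.297025 := by rw [e1]; norm_num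
      have s2 : v2 ^ 2 = 0.49 := by rw [e2]; norm_num
      linarith only [I4, e1, e2, e3, e4, s1, s2]
    · -- p 1 = 0, degenerate at 2
      have hv1val : v1 = 0.43 := by linarith only [hC2']
      rw [ha'] at hv1
      have hv2val : v2 = 0.47 := by linarith only [hv1, hv1val]
      rw [hC2'] at hv2
      linarith only [hv2, hv2val]
  · rcases hC2 with hb' | hb' | hC2'
    · -- p 1 = 1, p 2 = 0 : use I3
      rw [ha'] at hu1 hv1; rw [hb'] at hu2 hv2
      have e1 : v1 = 0.52 := by linarith only [hv1]
      have e2 : v2 = 0.745 := by linarith only [hv2, e1]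
      have e3 : u1 = -0.2704 := by linarith only [hu1]
      have e4 : u2 = -0.60565 := by linarith only [hu2, e3]
      have s2 : v2 ^ 2 = 0.555025 := by rw [e2]; norm_num
      linarith only [I3, e2, e4, s2]
    · -- p 1 = 1, p 2 = 1 : use I2
      rw [ha'] at hu1 hv1; rw [hb'] at hu2 hv2
      have e1 : v1 = 0.52 := by linarith only [hv1]
      have e2 : v2 = 0.70 := by linarith only [hv2]
      have e3 : u1 = -0.2704 := by linarith only [hu1]
      have e4 : u2 = -0.49 := by linarith only [hu2]
      have s1 : v1 ^ 2 = 0.2704 := by rw [e1]; norm_num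
      have s2 : v2 ^ 2 = 0.49 := by rw [e2]; norm_num
      linarith only [I2, e1, e2, e3, e4, s1, s2]
    · -- p 1 = 1, degenerate at 2
      have hv1val : v1 = 0.43 := by linarith only [hC2']
      rw [ha'] at hv1
      linarith only [hv1, hv1val]
  · rcases hC2 with hb' | hb' | hC2'
    · -- degenerate at 1, p 2 = 0
      have hv2val : v2 = 0.65 := by linarith only [hC1']
      rw [hb'] at hv2
      rw [hC1'] at hv1
      linarith only [hv1, hv2, hv2val]
    · -- degenerate at 1, p 2 = 1
      have hv2val : v2 = 0.65 := by linarith only [hC1']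
      rw [hb'] at hv2
      linarith only [hv2, hv2val]
    · -- both degenerate
      have hv1val : v1 = 0.43 := by linarith only [hC2']
      rw [hC1'] at hv1
      linarith only [hv1, hv1val]
end
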